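/- arXiv:2202.04272 — 6 statements merged into one kernel-verified Lean document; each statement's English description precedes it below -/
import Mathlib

section
/- Let A be a bounded linear operator on H. Then η(A)² ≥ 2 · max{ ber(A) · c(A*A), c(A) · ‖A*A‖_ber }. -/
open scoped InnerProductSpace
open ContinuousLinearMap

variable {H : Type*} [NormedAddCommGroup H] [InnerProductSpace ℂ H] [CompleteSpace H]
variable {Ω : Type*} [Nonempty Ω]

/-- Berezin number: `ber(T) = sup_{λ∈Ω} |⟨T k̂_λ, k̂_λ⟩|`. -/
noncomputable def ber (k : Ω → H) (T : H →L[ℂ] H) : ℝ :=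
  ⨆ lam : Ω, ‖⟪T (k lam), k lam⟫_ℂ‖

/-- Berezin norm: `‖T‖_ber = sup_{λ,μ∈Ω} |⟨T k̂_λ, k̂_μ⟩|`. -/
noncomputable def bernorm (k : Ω → H) (T : H →L[ℂ] H) : ℝ :=
  ⨆ p : Ω × Ω, ‖⟪T (k p.1), k p.2⟫_ℂ‖

/-- Least Berezin number: `c(T) = inf_{λ∈Ω} |⟨T k̂_λ, k̂_λ⟩|`. -/
noncomputable def lber (k : Ω → H) (T : H →L[ℂ] H) : ℝ :=
  ⨅ lam : Ω, ‖⟪T (k lam), k lam⟫_ℂ‖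

/-- Davis-Wielandt-Berezin radius: `η(T) = sup_{λ∈Ω} √(|⟨T k̂_λ, k̂_λ⟩|² + ‖T k̂_λ‖⁴)`. -/
noncomputable def eta (k : Ω → H) (T : H →L[ℂ] H) : ℝ :=
  ⨆ lam : Ω, Real.sqrt (‖⟪T (k lam), k lam⟫_ℂ‖ ^ 2 + ‖T (k lam)‖ ^ 4)

/-- The modulus `|A| = (A*A)^{1/2}`. -/
noncomputable def absop (A : H →L[ℂ] H) : H →L[ℂ] H := CFC.sqrt (adjoint A * A)

theorem stmt1 (k : Ω → H) (hk : ∀ lam, ‖k lam‖ = 1) (A : H →L[ℂ] H) :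
    (eta k A) ^ 2 ≥
      2 * max (ber k A * lber k (adjoint A * A)) (lber k A * bernorm k (adjoint A * A)) := by
  set f : Ω → ℝ := fun lam => ‖⟪A (k lam), k lam⟫_ℂ‖ with hf
  have hfA : ∀ lam, f lam ≤ ‖A‖ := by
    intro lam
    calc f lam ≤ ‖A (k lam)‖ * ‖k lam‖ := norm_inner_le_norm _ _
      _ ≤ ‖A‖ * ‖k lam‖ * ‖k lam‖ := by
          gcongr; exact A.le_opNorm _
      _ = ‖A‖ := by rw [hk lam]; ring
  have hAk : ∀ lam, ‖A (k lam)‖ ≤ ‖A‖ := by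
    intro lam
    calc ‖A (k lam)‖ ≤ ‖A‖ * ‖k lam‖ := A.le_opNorm _
      _ = ‖A‖ := by rw [hk lam, mul_one]
  -- boundedness of the eta family
  have hbdd : BddAbove (Set.range fun lam =>
      Real.sqrt (‖⟪A (k lam), k lam⟫_ℂ‖ ^ 2 + ‖A (k lam)‖ ^ 4)) := by
    refine ⟨Real.sqrt (‖A‖ ^ 2 + ‖A‖ ^ 4), ?_⟩
    rintro x ⟨lam, rfl⟩
    apply Real.sqrt_le_sqrt
    exact add_le_add (pow_le_pow_left₀ (norm_nonneg _) (hfA lam) 2)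
      (pow_le_pow_left₀ (norm_nonneg _) (hAk lam) 4)
  have heta0 : 0 ≤ eta k A := by
    obtain ⟨lam⟩ := ‹Nonempty Ω›
    exact le_trans (Real.sqrt_nonneg _) (le_ciSup hbdd lam)
  -- key pointwise bound
  have hkey : ∀ lam, f lam ^ 2 + ‖A (k lam)‖ ^ 4 ≤ (eta k A) ^ 2 := by
    intro lam
    have h1 : Real.sqrt (f lam ^ 2 + ‖A (k lam)‖ ^ 4) ≤ eta k A := le_ciSup hbdd lam
    have h2 : 0 ≤ f lam ^ 2 + ‖A (k lam)‖ ^ 4 := by positivity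
    calc f lam ^ 2 + ‖A (k lam)‖ ^ 4
        = Real.sqrt (f lam ^ 2 + ‖A (k lam)‖ ^ 4) ^ 2 := (Real.sq_sqrt h2).symm
      _ ≤ (eta k A) ^ 2 := by gcongr
  have hkey2 : ∀ lam, 2 * (f lam * ‖A (k lam)‖ ^ 2) ≤ (eta k A) ^ 2 := by
    intro lam
    have := two_mul_le_add_sq (f lam) (‖A (k lam)‖ ^ 2)
    calc 2 * (f lam * ‖A (k lam)‖ ^ 2) = 2 * f lam * ‖A (k lam)‖ ^ 2 := by ring
      _ ≤ f lam ^ 2 + (‖A (k lam)‖ ^ 2) ^ 2 := this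
      _ = f lam ^ 2 + ‖A (k lam)‖ ^ 4 := by ring
      _ ≤ (eta k A) ^ 2 := hkey lam
  -- inner products for A*A
  have hinner : ∀ lam mu, ⟪(adjoint A * A) (k lam), k mu⟫_ℂ = ⟪A (k lam), A (k mu)⟫_ℂ := by
    intro lam mu
    simp [ContinuousLinearMap.mul_apply, adjoint_inner_left]
  have hself : ∀ lam, ‖⟪(adjoint A * A) (k lam), k lam⟫_ℂ‖ = ‖A (k lam)‖ ^ 2 := by
    intro lam
    rw [hinner, inner_self_eq_norm_sq_to_K]
    push_cast
    simp [sq_abs]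
  -- nonnegativity of infima
  have hlber0 : 0 ≤ lber k (adjoint A * A) := Real.iInf_nonneg fun _ => norm_nonneg _
  have hlberA0 : 0 ≤ lber k A := Real.iInf_nonneg fun _ => norm_nonneg _
  rw [ge_iff_le]
  rcases max_cases (ber k A * lber k (adjoint A * A)) (lber k A * bernorm k (adjoint A * A))
    with ⟨h, _⟩ | ⟨h, _⟩ <;> rw [h]
  · -- first bound
    have : 2 * (ber k A * lber k (adjoint A * A)) =
        ⨆ lam : Ω, (2 * lber k (adjoint A * A)) * f lam := by
      rw [← Real.mul_iSup_of_nonneg (by linarith)]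
      unfold ber; ring
    rw [this]
    apply ciSup_le
    intro lam
    have hle : lber k (adjoint A * A) ≤ ‖A (k lam)‖ ^ 2 := by
      rw [← hself lam]
      exact ciInf_le ⟨0, by rintro x ⟨mu, rfl⟩; exact norm_nonneg _⟩ lam
    calc (2 * lber k (adjoint A * A)) * f lam ≤ 2 * ‖A (k lam)‖ ^ 2 * f lam := by
          have h0 : 0 ≤ f lam := norm_nonneg _
          nlinarith
      _ = 2 * (f lam * ‖A (k lam)‖ ^ 2) := by ring
      _ ≤ (eta k A) ^ 2 := hkey2 lam
  · -- second bound
    have : 2 * (lber k A * bernorm k (adjoint A * A)) =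
        ⨆ p : Ω × Ω, (2 * lber k A) * ‖⟪(adjoint A * A) (k p.1), k p.2⟫_ℂ‖ := by
      rw [← Real.mul_iSup_of_nonneg (by linarith)]
      unfold bernorm; ring
    rw [this]
    apply ciSup_le
    rintro ⟨lam, mu⟩
    have hblam : lber k A ≤ f lam := ciInf_le ⟨0, by rintro x ⟨v, rfl⟩; exact norm_nonneg _⟩ lam
    have hbmu : lber k A ≤ f mu := ciInf_le ⟨0, by rintro x ⟨v, rfl⟩; exact norm_nonneg _⟩ mu
    have hcs : ‖⟪(adjoint A * A) (k lam), k mu⟫_ℂ‖ ≤ ‖A (k lam)‖ * ‖A (k mu)‖ := by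
      rw [hinner]; exact norm_inner_le_norm _ _
    have hAM : 2 * (‖A (k lam)‖ * ‖A (k mu)‖) ≤ ‖A (k lam)‖ ^ 2 + ‖A (k mu)‖ ^ 2 := by
      nlinarith [sq_nonneg (‖A (k lam)‖ - ‖A (k mu)‖)]
    have h1 := hkey2 lam
    have h2 := hkey2 mu
    have hf0 : 0 ≤ f lam := norm_nonneg _
    have hg0 : 0 ≤ f mu := norm_nonneg _
    nlinarith [norm_nonneg (A (k lam)), norm_nonneg (A (k mu)), sq_nonneg (‖A (k lam)‖),
      sq_nonneg (‖A (k mu)‖)]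
end

section
/- Let A be a bounded linear operator on H. Then η(A)² ≥ max{ c(A)²·(1 + ‖A*A‖_ber), ber(A)²·(1 + c(A*A)) }. -/
open scoped InnerProductSpace
open ContinuousLinearMap

variable {H : Type*} [NormedAddCommGroup H] [InnerProductSpace ℂ H] [CompleteSpace H]
variable {Ω : Type*} [Nonempty Ω]

set_option maxHeartbeats 1000000 in
theorem stmt2 (k : Ω → H) (hk : ∀ lam, ‖k lam‖ = 1) (A : H →L[ℂ] H) :
    (eta k A) ^ 2 ≥
      max ((lber k A) ^ 2 * (1 + bernorm k (adjoint A * A)))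
        ((ber k A) ^ 2 * (1 + lber k (adjoint A * A))) := by
  classical
  set g : Ω → ℝ := fun lam => ‖⟪A (k lam), k lam⟫_ℂ‖ with hgdef
  set n : Ω → ℝ := fun lam => ‖A (k lam)‖ with hndef
  have hg0 : ∀ lam, 0 ≤ g lam := fun lam => norm_nonneg _
  have hn0 : ∀ lam, 0 ≤ n lam := fun lam => norm_nonneg _
  have hgn : ∀ lam, g lam ≤ n lam := by
    intro lam
    have := norm_inner_le_norm (𝕜 := ℂ) (A (k lam)) (k lam)
    simpa [hk lam] using this
  have hnA : ∀ lam, n lam ≤ ‖A‖ := by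
    intro lam
    have := A.le_opNorm (k lam)
    simpa [hk lam] using this
  have hAA : ∀ x y : H, ⟪(adjoint A * A) x, y⟫_ℂ = ⟪A x, A y⟫_ℂ := by
    intro x y
    simp [ContinuousLinearMap.mul_apply, ContinuousLinearMap.adjoint_inner_left]
  have hAAn : ∀ lam, ‖⟪(adjoint A * A) (k lam), k lam⟫_ℂ‖ = n lam ^ 2 := by
    intro lam
    rw [hAA]
    rw [inner_self_eq_norm_sq_to_K (𝕜 := ℂ)]
    simp [hndef]
  -- eta bounds
  have hetadef : eta k A = ⨆ lam, Real.sqrt (g lam ^ 2 + n lam ^ 4) := rfl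
  have hetub : BddAbove (Set.range fun lam => Real.sqrt (g lam ^ 2 + n lam ^ 4)) := by
    refine ⟨Real.sqrt (‖A‖ ^ 2 + ‖A‖ ^ 4), ?_⟩
    rintro x ⟨lam, rfl⟩
    apply Real.sqrt_le_sqrt
    have h1 : g lam ^ 2 ≤ ‖A‖ ^ 2 :=
      pow_le_pow_left₀ (hg0 lam) ((hgn lam).trans (hnA lam)) 2
    have h2 : n lam ^ 4 ≤ ‖A‖ ^ 4 := pow_le_pow_left₀ (hn0 lam) (hnA lam) 4
    linarith
  have heta0 : 0 ≤ eta k A := by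
    rw [hetadef]
    exact le_trans (Real.sqrt_nonneg _) (le_ciSup hetub (Classical.arbitrary Ω))
  have heta : ∀ lam, g lam ^ 2 + n lam ^ 4 ≤ (eta k A) ^ 2 := by
    intro lam
    have h1 : Real.sqrt (g lam ^ 2 + n lam ^ 4) ≤ eta k A := by
      rw [hetadef]; exact le_ciSup hetub lam
    nlinarith [Real.sq_sqrt (by positivity : (0:ℝ) ≤ g lam ^ 2 + n lam ^ 4),
      Real.sqrt_nonneg (g lam ^ 2 + n lam ^ 4)]
  -- lber A
  have hlberdef : lber k A = ⨅ lam, g lam := rfl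
  have hc0le : ∀ lam, lber k A ≤ g lam := by
    intro lam; rw [hlberdef]
    exact ciInf_le ⟨0, by rintro x ⟨l, rfl⟩; exact hg0 l⟩ lam
  have hc00 : 0 ≤ lber k A := by
    rw [hlberdef]; exact le_ciInf hg0
  -- lber (A*A)
  have hc2le : ∀ lam, lber k (adjoint A * A) ≤ n lam ^ 2 := by
    intro lam
    have : lber k (adjoint A * A) ≤ ‖⟪(adjoint A * A) (k lam), k lam⟫_ℂ‖ :=
      ciInf_le ⟨0, by rintro x ⟨l, rfl⟩; exact norm_nonneg _⟩ lam
    rwa [hAAn] at this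
  have hc20 : 0 ≤ lber k (adjoint A * A) :=
    le_ciInf fun lam => norm_nonneg _
  -- ber A
  have hberdef : ber k A = ⨆ lam, g lam := rfl
  have hber0 : 0 ≤ ber k A := by
    rw [hberdef]
    exact le_trans (hg0 _) (le_ciSup ⟨‖A‖, by rintro x ⟨l, rfl⟩; exact (hgn l).trans (hnA l)⟩
      (Classical.arbitrary Ω))
  -- bernorm (A*A)
  have hbp : ∀ p : Ω × Ω, ‖⟪(adjoint A * A) (k p.1), k p.2⟫_ℂ‖ ≤ n p.1 * n p.2 := by
    intro p
    rw [hAA]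
    exact norm_inner_le_norm _ _
  refine max_le ?_ ?_
  · -- lber part
    rcases eq_or_lt_of_le hc00 with h0 | h0
    · rw [← h0]
      simpa using sq_nonneg (eta k A)
    · have hc0 : 0 < lber k A := h0
      have key : ∀ p : Ω × Ω, ‖⟪(adjoint A * A) (k p.1), k p.2⟫_ℂ‖ ≤
          (eta k A) ^ 2 / (lber k A) ^ 2 - 1 := by
        intro p
        have hb := hbp p
        have hbnn : (0:ℝ) ≤ ‖⟪(adjoint A * A) (k p.1), k p.2⟫_ℂ‖ := norm_nonneg _
        have hkey : (lber k A) ^ 2 * (1 + ‖⟪(adjoint A * A) (k p.1), k p.2⟫_ℂ‖)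
            ≤ (eta k A) ^ 2 := by
          rcases le_total (n p.1) (n p.2) with hle | hle
          · have h1 : (lber k A) ^ 2 ≤ g p.2 ^ 2 := pow_le_pow_left₀ hc00 (hc0le p.2) 2
            have h2 : (lber k A) ^ 2 ≤ n p.2 ^ 2 :=
              pow_le_pow_left₀ hc00 ((hc0le p.2).trans (hgn p.2)) 2
            have h3 : ‖⟪(adjoint A * A) (k p.1), k p.2⟫_ℂ‖ ≤ n p.2 ^ 2 := by
              nlinarith [hn0 p.1, hn0 p.2]
            have h4 : (lber k A) ^ 2 * ‖⟪(adjoint A * A) (k p.1), k p.2⟫_ℂ‖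
                ≤ n p.2 ^ 2 * n p.2 ^ 2 :=
              mul_le_mul h2 h3 hbnn (sq_nonneg _)
            nlinarith [heta p.2]
          · have h1 : (lber k A) ^ 2 ≤ g p.1 ^ 2 := pow_le_pow_left₀ hc00 (hc0le p.1) 2
            have h2 : (lber k A) ^ 2 ≤ n p.1 ^ 2 :=
              pow_le_pow_left₀ hc00 ((hc0le p.1).trans (hgn p.1)) 2
            have h3 : ‖⟪(adjoint A * A) (k p.1), k p.2⟫_ℂ‖ ≤ n p.1 ^ 2 := by
              nlinarith [hn0 p.1, hn0 p.2]
            have h4 : (lber k A) ^ 2 * ‖⟪(adjoint A * A) (k p.1), k p.2⟫_ℂ‖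
                ≤ n p.1 ^ 2 * n p.1 ^ 2 :=
              mul_le_mul h2 h3 hbnn (sq_nonneg _)
            nlinarith [heta p.1]
        rw [le_sub_iff_add_le, le_div_iff₀ (by positivity : (0:ℝ) < (lber k A) ^ 2)]
        nlinarith [hkey]
      have hbb : bernorm k (adjoint A * A) ≤ (eta k A) ^ 2 / (lber k A) ^ 2 - 1 := by
        rw [show bernorm k (adjoint A * A)
            = ⨆ p : Ω × Ω, ‖⟪(adjoint A * A) (k p.1), k p.2⟫_ℂ‖ from rfl]
        exact ciSup_le key
      have h2 : (lber k A) ^ 2 * (1 + bernorm k (adjoint A * A)) ≤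
          (lber k A) ^ 2 * ((eta k A) ^ 2 / (lber k A) ^ 2) := by
        have := mul_le_mul_of_nonneg_left hbb (by positivity : (0:ℝ) ≤ (lber k A) ^ 2)
        nlinarith [this]
      calc (lber k A) ^ 2 * (1 + bernorm k (adjoint A * A))
          ≤ (lber k A) ^ 2 * ((eta k A) ^ 2 / (lber k A) ^ 2) := h2
        _ = (eta k A) ^ 2 := by field_simp
  · -- ber part
    set c2 := lber k (adjoint A * A) with hc2def
    have hc21 : (0:ℝ) < 1 + c2 := by linarith
    have hB : ∀ lam, g lam ≤ Real.sqrt ((eta k A) ^ 2 / (1 + c2)) := by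
      intro lam
      have hgg : g lam ^ 2 ≤ n lam ^ 2 := pow_le_pow_left₀ (hg0 lam) (hgn lam) 2
      have h4 : g lam ^ 2 * c2 ≤ n lam ^ 2 * n lam ^ 2 :=
        mul_le_mul hgg (hc2le lam) hc20 (sq_nonneg _)
      have hkey : g lam ^ 2 * (1 + c2) ≤ (eta k A) ^ 2 := by
        nlinarith [heta lam]
      rw [Real.le_sqrt (hg0 lam), le_div_iff₀ hc21]
      · linarith
      · positivity
    have hberB : ber k A ≤ Real.sqrt ((eta k A) ^ 2 / (1 + c2)) := by
      rw [hberdef]; exact ciSup_le hB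
    have hsq : (ber k A) ^ 2 ≤ (eta k A) ^ 2 / (1 + c2) := by
      have := pow_le_pow_left₀ hber0 hberB 2
      rwa [Real.sq_sqrt (by positivity)] at this
    calc (ber k A) ^ 2 * (1 + c2)
        ≤ ((eta k A) ^ 2 / (1 + c2)) * (1 + c2) :=
          mul_le_mul_of_nonneg_right hsq (le_of_lt hc21)
      _ = (eta k A) ^ 2 := div_mul_cancel₀ _ (ne_of_gt hc21)
end

section
/- Let A be a bounded linear operator on H. Then η(A)² ≤ (1/2)·( ber(A + |A|²)² + ber(A − |A|²)² ). -/
open scoped InnerProductSpace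
open ContinuousLinearMap

variable {H : Type*} [NormedAddCommGroup H] [InnerProductSpace ℂ H] [CompleteSpace H]
variable {Ω : Type*} [Nonempty Ω]

theorem stmt4 (k : Ω → H) (hk : ∀ lam, ‖k lam‖ = 1) (A : H →L[ℂ] H) :
    (eta k A) ^ 2 ≤
      (1 / 2) * ((ber k (A + (absop A) ^ 2)) ^ 2 + (ber k (A - (absop A) ^ 2)) ^ 2) := by
  have hpos : (0 : H →L[ℂ] H) ≤ adjoint A * A := by
    rw [← ContinuousLinearMap.star_eq_adjoint]; exact star_mul_self_nonneg A
  have habs : (absop A) ^ 2 = adjoint A * A := by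
    rw [absop]; exact CFC.sq_sqrt (adjoint A * A) hpos
  have key : ∀ T : H →L[ℂ] H, ∀ lam : Ω, ‖⟪T (k lam), k lam⟫_ℂ‖ ≤ ‖T‖ := by
    intro T lam
    calc ‖⟪T (k lam), k lam⟫_ℂ‖ ≤ ‖T (k lam)‖ * ‖k lam‖ := norm_inner_le_norm _ _
    _ ≤ ‖T‖ * ‖k lam‖ * ‖k lam‖ := by gcongr; exact T.le_opNorm _
    _ = ‖T‖ := by rw [hk]; ring
  have hbdd : ∀ T : H →L[ℂ] H,
      BddAbove (Set.range fun lam : Ω => ‖⟪T (k lam), k lam⟫_ℂ‖) :=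
    fun T => ⟨‖T‖, Set.forall_mem_range.2 (key T)⟩
  have hberle : ∀ T : H →L[ℂ] H, ∀ lam : Ω, ‖⟪T (k lam), k lam⟫_ℂ‖ ≤ ber k T :=
    fun T lam => le_ciSup (hbdd T) lam
  set C : ℝ := (1 / 2) * ((ber k (A + (absop A) ^ 2)) ^ 2 + (ber k (A - (absop A) ^ 2)) ^ 2)
    with hC
  have hbernn : ∀ T : H →L[ℂ] H, 0 ≤ ber k T :=
    fun T => le_trans (norm_nonneg _) (hberle T Classical.ofNonempty)
  have hCnn : 0 ≤ C := by positivity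
  have heta : eta k A ≤ Real.sqrt C := by
    apply ciSup_le
    intro lam
    apply Real.sqrt_le_sqrt
    set x := k lam with hx
    set a : ℂ := ⟪A x, x⟫_ℂ with ha
    set b : ℂ := ((‖A x‖ : ℂ)) ^ 2 with hb
    have hbnorm : ‖b‖ = ‖A x‖ ^ 2 := by
      rw [hb, norm_pow, Complex.norm_real, norm_norm]
    have hab : ⟪(A + absop A ^ 2) x, x⟫_ℂ = a + b := by
      simp [habs, ContinuousLinearMap.add_apply, inner_add_left,
        ContinuousLinearMap.mul_apply, ContinuousLinearMap.adjoint_inner_left,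
        inner_self_eq_norm_sq_to_K, ha, hb]
    have hsub : ⟪(A - absop A ^ 2) x, x⟫_ℂ = a - b := by
      simp [habs, ContinuousLinearMap.sub_apply, inner_sub_left,
        ContinuousLinearMap.mul_apply, ContinuousLinearMap.adjoint_inner_left,
        inner_self_eq_norm_sq_to_K, ha, hb]
    have hpar := parallelogram_law_with_norm ℂ a b
    rw [hbnorm] at hpar
    have h1 : ‖a + b‖ ≤ ber k (A + absop A ^ 2) := by
      have := hberle (A + absop A ^ 2) lam
      rwa [← hx, hab] at this
    have h2 : ‖a - b‖ ≤ ber k (A - absop A ^ 2) := by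
      have := hberle (A - absop A ^ 2) lam
      rwa [← hx, hsub] at this
    have h1' : ‖a + b‖ ^ 2 ≤ ber k (A + absop A ^ 2) ^ 2 :=
      pow_le_pow_left₀ (norm_nonneg _) h1 2
    have h2' : ‖a - b‖ ^ 2 ≤ ber k (A - absop A ^ 2) ^ 2 :=
      pow_le_pow_left₀ (norm_nonneg _) h2 2
    rw [hC]
    nlinarith [hpar]
  have hetann : 0 ≤ eta k A := Real.iSup_nonneg fun _ => Real.sqrt_nonneg _
  calc (eta k A) ^ 2 ≤ Real.sqrt C ^ 2 := pow_le_pow_left₀ hetann heta 2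
  _ = C := Real.sq_sqrt hCnn
end

section
/- Let A be a bounded linear operator on H. Then η(A)² ≥ (1/2)·max{ ber(A + |A|²)² + c(A − |A|²)², ber(A − |A|²)² + c(A + |A|²)² }. -/
/-! For a unit vector `x`, put `z = ⟪A x, x⟫` and `r = ‖A x‖²`. Since `|A|² = A*A`, the Berezin
symbols of `A ± |A|²` at `x` are `z ± r`, and the parallelogram law in `ℂ` gives
`|z + r|² + |z - r|² = 2 (|z|² + r²) ≤ 2 η(A)²`. Bounding one of the two terms by its supremum over
the kernels and the other by its infimum yields both halves of the maximum. -/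

open scoped InnerProductSpace
open ContinuousLinearMap

variable {H : Type*} [NormedAddCommGroup H] [InnerProductSpace ℂ H] [CompleteSpace H]
variable {Ω : Type*} [Nonempty Ω]

theorem sq_iSup_add_sq_iInf_le {ι : Type*} [Nonempty ι] {f g : ι → ℝ} {M : ℝ}
    (hf : ∀ i, 0 ≤ f i) (hg : ∀ i, 0 ≤ g i) (h : ∀ i, f i ^ 2 + g i ^ 2 ≤ M) :
    (⨆ i, f i) ^ 2 + (⨅ i, g i) ^ 2 ≤ M := by
  set c := ⨅ i, g i
  have hc : 0 ≤ c := Real.iInf_nonneg hg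
  have hcg (i : ι) : c ≤ g i := ciInf_le ⟨0, Set.forall_mem_range.2 hg⟩ i
  have hf_sq (i : ι) : f i ^ 2 ≤ M - c ^ 2 := by nlinarith [h i, hcg i]
  have hM : 0 ≤ M - c ^ 2 := (sq_nonneg _).trans (hf_sq (Classical.arbitrary ι))
  have hsup : ⨆ i, f i ≤ √(M - c ^ 2) :=
    Real.iSup_le (fun i => (Real.le_sqrt (hf i) hM).2 (hf_sq i)) (Real.sqrt_nonneg _)
  have := pow_le_pow_left₀ (Real.iSup_nonneg hf) hsup 2
  rw [Real.sq_sqrt hM] at this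
  linarith

theorem norm_inner_apply_self_le_opNorm {E : Type*} [NormedAddCommGroup E] [InnerProductSpace ℂ E]
    (T : E →L[ℂ] E) {x : E} (hx : ‖x‖ = 1) : ‖⟪T x, x⟫_ℂ‖ ≤ ‖T‖ :=
  calc ‖⟪T x, x⟫_ℂ‖ ≤ ‖T x‖ * ‖x‖ := norm_inner_le_norm _ _
    _ ≤ ‖T‖ := by rw [hx, mul_one]; exact T.unit_le_opNorm x hx.le

theorem sq_norm_inner_add_pow_four_le_eta_sq {E : Type*} [NormedAddCommGroup E]
    [InnerProductSpace ℂ E] {ι : Type*} (k : ι → E) (hk : ∀ i, ‖k i‖ = 1) (T : E →L[ℂ] E) (i : ι) :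
    ‖⟪T (k i), k i⟫_ℂ‖ ^ 2 + ‖T (k i)‖ ^ 4 ≤ eta k T ^ 2 := by
  have hbdd : BddAbove (Set.range fun lam : ι =>
      √(‖⟪T (k lam), k lam⟫_ℂ‖ ^ 2 + ‖T (k lam)‖ ^ 4)) := by
    refine ⟨√(‖T‖ ^ 2 + ‖T‖ ^ 4), Set.forall_mem_range.2 fun lam => ?_⟩
    have h₁ := norm_inner_apply_self_le_opNorm T (hk lam)
    have h₂ := T.unit_le_opNorm _ (hk lam).le
    gcongr
  exact (Real.sqrt_le_left (Real.iSup_nonneg fun _ => Real.sqrt_nonneg _)).1 (le_ciSup hbdd i)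

theorem absop_sq (A : H →L[ℂ] H) : absop A ^ 2 = adjoint A * A :=
  CFC.sq_sqrt _ (by simpa [star_eq_adjoint] using star_mul_self_nonneg A)

theorem inner_absop_sq_apply_self (A : H →L[ℂ] H) (x : H) :
    ⟪(absop A ^ 2) x, x⟫_ℂ = (‖A x‖ ^ 2 : ℂ) := by
  rw [absop_sq, mul_apply_eq_comp, adjoint_inner_left]
  exact inner_self_eq_norm_sq_to_K (A x)

theorem parallelogram_inner_add_sub_absop_sq (A : H →L[ℂ] H) (x : H) :
    ‖⟪(A + absop A ^ 2) x, x⟫_ℂ‖ ^ 2 + ‖⟪(A - absop A ^ 2) x, x⟫_ℂ‖ ^ 2 =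
      2 * (‖⟪A x, x⟫_ℂ‖ ^ 2 + ‖A x‖ ^ 4) := by
  rw [add_apply, sub_apply, inner_add_left, inner_sub_left, inner_absop_sq_apply_self,
    parallelogram_law_with_norm ℝ, ← Complex.ofReal_pow, Complex.norm_of_nonneg (by positivity)]
  ring

theorem stmt5 (k : Ω → H) (hk : ∀ lam, ‖k lam‖ = 1) (A : H →L[ℂ] H) :
    (eta k A) ^ 2 ≥
      (1 / 2) * max ((ber k (A + (absop A) ^ 2)) ^ 2 + (lber k (A - (absop A) ^ 2)) ^ 2)
        ((ber k (A - (absop A) ^ 2)) ^ 2 + (lber k (A + (absop A) ^ 2)) ^ 2) := by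
  have hpar (lam : Ω) := parallelogram_inner_add_sub_absop_sq A (k lam)
  have heta := sq_norm_inner_add_pow_four_le_eta_sq k hk A
  have hplus : ber k (A + absop A ^ 2) ^ 2 + lber k (A - absop A ^ 2) ^ 2 ≤ 2 * eta k A ^ 2 :=
    sq_iSup_add_sq_iInf_le (fun _ => norm_nonneg _) (fun _ => norm_nonneg _)
      fun lam => by linarith [hpar lam, heta lam]
  have hminus : ber k (A - absop A ^ 2) ^ 2 + lber k (A + absop A ^ 2) ^ 2 ≤ 2 * eta k A ^ 2 :=
    sq_iSup_add_sq_iInf_le (fun _ => norm_nonneg _) (fun _ => norm_nonneg _)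
      fun lam => by linarith [hpar lam, heta lam]
  linarith [max_le hplus hminus]
end

section
/- Let A be a bounded linear operator on H. Then η(A)² ≤ (1/4)·‖ |A| + |A*| ‖_ber² + (1/4)·ber( 2|A|² + |A| − |A*| ) · ber( 2|A|² − |A| + |A*| ). -/
open scoped InnerProductSpace
open ContinuousLinearMap

variable {H : Type*} [NormedAddCommGroup H] [InnerProductSpace ℂ H] [CompleteSpace H]
variable {Ω : Type*} [Nonempty Ω]

/-!
The key estimate is the mixed Schwarz inequality `‖⟪A x, y⟫‖² ≤ ⟪|A| x, x⟫ ⟪|A*| y, y⟫`.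
For a unit vector `x` put `a = ⟪|A| x, x⟫`, `b = ⟪|A*| x, x⟫` and `t = ‖A x‖² = ⟪|A|² x, x⟫`;
then `|⟪A x, x⟫|² + ‖A x‖⁴ ≤ a b + t² = ¼ (a + b)² + ¼ (2t + a - b)(2t - a + b)`, and the three
quantities on the right are Berezin symbols, bounded by the Berezin norm and Berezin numbers.

The mixed Schwarz inequality is proved without a polar decomposition: for `ε > 0` let
`R = (|A| + ε)^{1/2}` and `S = R⁻¹`, both functions of `A*A`. Then `⟪A x, y⟫ = ⟪R x, S A* y⟫` and
`‖S A* y‖² = ⟪A (|A| + ε)⁻¹ A* y, y⟫ ≤ ⟪|A*| y, y⟫`, since `A f(A*A) = f(AA*) A` for every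
continuous `f`; finally let `ε → 0`.
-/

open Polynomial

theorem le_of_forall_pos_le_of_continuousAt {g : ℝ → ℝ} {b : ℝ} (hg : ContinuousAt g 0)
    (h : ∀ ε > 0, b ≤ g ε) : b ≤ g 0 :=
  ge_of_tendsto (hg.tendsto.mono_left nhdsWithin_le_nhds)
    (eventually_nhdsWithin_of_forall (s := Set.Ioi 0) h)

theorem SemiconjBy.aeval {R A : Type*} [CommSemiring R] [Semiring A] [Algebra R A] {x a b : A}
    (h : SemiconjBy x a b) (q : R[X]) : SemiconjBy x (aeval a q) (aeval b q) := by
  induction q using Polynomial.induction_on' with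
  | add p q hp hq => simpa only [map_add] using hp.add_right hq
  | monomial n r =>
    simp only [aeval_monomial]
    exact SemiconjBy.mul_right (Algebra.commute_algebraMap_right r x) (h.pow_right n)

section Intertwining

variable {A : Type*} [CStarAlgebra A]

theorem SemiconjBy.cfc_real {x a b : A} (h : SemiconjBy x a b) (ha : IsSelfAdjoint a)
    (hb : IsSelfAdjoint b) {f : ℝ → ℝ} (hf : Continuous f) :
    SemiconjBy x (cfc f a) (cfc f b) := by
  obtain ⟨M, hM⟩ :=
    ((spectrum.isCompact (𝕜 := ℝ) a).union (spectrum.isCompact b)).isBounded.subset_closedBall 0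
  rw [Real.closedBall_eq_Icc, zero_sub, zero_add] at hM
  have approx : ∀ ε > 0, ‖x * cfc f a - cfc f b * x‖ ≤ 2 * ‖x‖ * ε := by
    intro ε hε
    obtain ⟨q, hq⟩ := exists_polynomial_near_of_continuousOn (-M) M f hf.continuousOn ε hε
    have hrem : ∀ c : A, spectrum ℝ c ⊆ Set.Icc (-M) M →
        ‖cfc (fun t => f t - q.eval t) c‖ ≤ ε := fun c hc =>
      norm_cfc_le hε.le fun t ht => by
        rw [Real.norm_eq_abs, abs_sub_comm]; exact (hq t (hc ht)).le
    have hsplit : x * cfc f a - cfc f b * x =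
        x * cfc (fun t => f t - q.eval t) a - cfc (fun t => f t - q.eval t) b * x := by
      rw [cfc_sub .., cfc_sub .., cfc_polynomial q a, cfc_polynomial q b, mul_sub, sub_mul,
        (h.aeval q).eq]
      abel
    calc ‖x * cfc f a - cfc f b * x‖
        ≤ ‖x‖ * ε + ε * ‖x‖ := by
          rw [hsplit]
          refine (norm_sub_le _ _).trans (add_le_add ?_ ?_)
          · exact (norm_mul_le _ _).trans <| mul_le_mul_of_nonneg_left
              (hrem a (Set.subset_union_left.trans hM)) (norm_nonneg x)
          · exact (norm_mul_le _ _).trans <| mul_le_mul_of_nonneg_right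
              (hrem b (Set.subset_union_right.trans hM)) (norm_nonneg x)
      _ = 2 * ‖x‖ * ε := by ring
  have := le_of_forall_pos_le_of_continuousAt (g := fun ε => 2 * ‖x‖ * ε) (by fun_prop) approx
  rwa [mul_zero, norm_le_zero_iff, sub_eq_zero] at this

end Intertwining

open ContinuousLinearMap RCLike

section Modulus

variable (T : H →L[ℂ] H)

theorem adjoint_mul_self_nonneg : 0 ≤ adjoint T * T := star_mul_self_nonneg T

theorem absop_eq_cfc_sqrt : absop T = cfc Real.sqrt (adjoint T * T) := by
  rw [absop, CFC.sqrt_eq_real_sqrt _ (adjoint_mul_self_nonneg T), cfcₙ_eq_cfc]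

theorem re_inner_absop_sq (x : H) : re ⟪(absop T ^ 2) x, x⟫_ℂ = ‖T x‖ ^ 2 := by
  rw [sq, absop, CFC.sqrt_mul_sqrt_self _ (adjoint_mul_self_nonneg T),
    apply_norm_sq_eq_inner_adjoint_left]
  rfl

theorem re_inner_le_re_inner_of_le {E : Type*} [NormedAddCommGroup E] [InnerProductSpace ℂ E]
    {S R : E →L[ℂ] E} (h : S ≤ R) (x : E) :
    re ⟪S x, x⟫_ℂ ≤ re ⟪R x, x⟫_ℂ := by
  have := ((le_def S R).mp h).re_inner_nonneg_left x
  rwa [sub_apply, inner_sub_left, map_sub, sub_nonneg] at this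

theorem mul_cfc_mul_adjoint_le_absop_adjoint {ε : ℝ} (hε : 0 < ε) :
    T * cfc (fun t => (√t + ε)⁻¹) (adjoint T * T) * adjoint T ≤ absop (adjoint T) := by
  have hw : Continuous fun t : ℝ => (√t + ε)⁻¹ :=
    (Real.continuous_sqrt.add continuous_const).inv₀ fun t =>
      (add_pos_of_nonneg_of_pos (Real.sqrt_nonneg t) hε).ne'
  have hTT' : 0 ≤ T * adjoint T := by
    simpa only [adjoint_adjoint] using adjoint_mul_self_nonneg (adjoint T)
  rw [(SemiconjBy.cfc_real (mul_assoc _ _ _).symm (.of_nonneg (adjoint_mul_self_nonneg T))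
      (.of_nonneg hTT') hw).eq, mul_assoc, absop_eq_cfc_sqrt, adjoint_adjoint]
  nth_rewrite 2 [← cfc_id' ℝ (T * adjoint T)]
  rw [← cfc_mul (fun t => (√t + ε)⁻¹) (fun t => t) _ hw.continuousOn continuousOn_id]
  refine cfc_mono fun t ht => ?_
  have ht0 : 0 ≤ t := spectrum_nonneg_of_nonneg hTT' ht
  rw [inv_mul_eq_div, div_le_iff₀ (by positivity)]
  nlinarith [Real.sq_sqrt ht0, Real.sqrt_nonneg t]

end Modulus

theorem inner_apply_eq_inner_of_mul_eq_one {T R S : H →L[ℂ] H} (hS : IsSelfAdjoint S)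
    (hSR : S * R = 1) (x y : H) : ⟪T x, y⟫_ℂ = ⟪R x, S (adjoint T y)⟫_ℂ :=
  calc ⟪T x, y⟫_ℂ = ⟪(S * R) x, adjoint T y⟫_ℂ := by
        rw [hSR, one_apply_eq_self, adjoint_inner_right]
    _ = ⟪R x, S (adjoint T y)⟫_ℂ := by
        rw [mul_apply_eq_comp, ← adjoint_inner_right, hS.adjoint_eq]

theorem norm_inner_sq_le_re_inner_absop_add_mul (T : H →L[ℂ] H) (x y : H) {ε : ℝ}
    (hε : 0 < ε) :
    ‖⟪T x, y⟫_ℂ‖ ^ 2 ≤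
      (re ⟪absop T x, x⟫_ℂ + ε * ‖x‖ ^ 2) * re ⟪absop (adjoint T) y, y⟫_ℂ := by
  set P := adjoint T * T
  have hP : IsSelfAdjoint P := .of_nonneg (adjoint_mul_self_nonneg T)
  set u : ℝ → ℝ := fun t => √(√t + ε)
  have hu_pos : ∀ t, 0 < u t := fun t => Real.sqrt_pos.mpr (by positivity)
  have hu : Continuous u := (Real.continuous_sqrt.add continuous_const).sqrt
  have hu_inv : Continuous fun t => (u t)⁻¹ := hu.inv₀ fun t => (hu_pos t).ne'
  set R := cfc u P
  set S := cfc (fun t => (u t)⁻¹) P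
  have hR : IsSelfAdjoint R := cfc_predicate _ P
  have hS : IsSelfAdjoint S := cfc_predicate _ P
  have hSR : S * R = 1 := by
    rw [← cfc_mul _ _ P hu_inv.continuousOn hu.continuousOn, ← cfc_one ℝ P]
    exact cfc_congr fun t _ => inv_mul_cancel₀ (hu_pos t).ne'
  have hRR : R * R = absop T + algebraMap ℝ _ ε := by
    rw [← cfc_mul _ _ P hu.continuousOn hu.continuousOn, absop_eq_cfc_sqrt, ← cfc_const ε P,
      ← cfc_add ..]
    exact cfc_congr fun t _ => Real.mul_self_sqrt (by positivity)
  have hSS : S * S = cfc (fun t => (√t + ε)⁻¹) P := by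
    rw [← cfc_mul _ _ P hu_inv.continuousOn hu_inv.continuousOn]
    refine cfc_congr fun t _ => ?_
    rw [← mul_inv, Real.mul_self_sqrt (by positivity)]
  have hRx : ‖R x‖ ^ 2 = re ⟪absop T x, x⟫_ℂ + ε * ‖x‖ ^ 2 := by
    rw [apply_norm_sq_eq_inner_adjoint_left, hR.adjoint_eq, ← mul_def, hRR, add_apply,
      inner_add_left, map_add, Algebra.algebraMap_eq_smul_one, smul_apply, one_apply_eq_self,
      RCLike.real_smul_eq_coe_smul (K := ℂ), inner_smul_left]
    simp [← Complex.ofReal_pow]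
  have hSy : ‖S (adjoint T y)‖ ^ 2 ≤ re ⟪absop (adjoint T) y, y⟫_ℂ := by
    refine Eq.trans_le ?_
      (re_inner_le_re_inner_of_le (mul_cfc_mul_adjoint_le_absop_adjoint T hε) y)
    rw [← mul_apply_eq_comp S (adjoint T), apply_norm_sq_eq_inner_adjoint_left, ← mul_def,
      ← star_eq_adjoint, star_mul, hS.star_eq, star_eq_adjoint, adjoint_adjoint, ← hSS]
    simp only [mul_assoc]
  calc ‖⟪T x, y⟫_ℂ‖ ^ 2 ≤ (‖R x‖ * ‖S (adjoint T y)‖) ^ 2 := by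
        rw [inner_apply_eq_inner_of_mul_eq_one hS hSR]; gcongr; exact norm_inner_le_norm _ _
    _ = ‖R x‖ ^ 2 * ‖S (adjoint T y)‖ ^ 2 := mul_pow ..
    _ ≤ _ := by rw [← hRx]; gcongr

theorem norm_inner_sq_le_re_inner_absop_mul (T : H →L[ℂ] H) (x y : H) :
    ‖⟪T x, y⟫_ℂ‖ ^ 2 ≤ re ⟪absop T x, x⟫_ℂ * re ⟪absop (adjoint T) y, y⟫_ℂ := by
  simpa using le_of_forall_pos_le_of_continuousAt
    (g := fun ε => (re ⟪absop T x, x⟫_ℂ + ε * ‖x‖ ^ 2) * re ⟪absop (adjoint T) y, y⟫_ℂ)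
    (by fun_prop) fun ε hε => norm_inner_sq_le_re_inner_absop_add_mul T x y hε

theorem norm_inner_sq_add_norm_pow_four_le (T : H →L[ℂ] H) (x : H) :
    ‖⟪T x, x⟫_ℂ‖ ^ 2 + ‖T x‖ ^ 4 ≤
      1 / 4 * re ⟪(absop T + absop (adjoint T)) x, x⟫_ℂ ^ 2 +
        1 / 4 * (re ⟪(2 • absop T ^ 2 + absop T - absop (adjoint T)) x, x⟫_ℂ *
          re ⟪(2 • absop T ^ 2 - absop T + absop (adjoint T)) x, x⟫_ℂ) := by
  have hSchwarz := norm_inner_sq_le_re_inner_absop_mul T x x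
  simp only [add_apply, sub_apply, two_smul, inner_add_left, inner_sub_left, map_add, map_sub,
    re_inner_absop_sq]
  linear_combination hSchwarz

section Berezin

variable {k : Ω → H}

omit [CompleteSpace H] [Nonempty Ω] in
theorem norm_inner_le_opNorm_of_norm_eq_one (hk : ∀ lam, ‖k lam‖ = 1) (T : H →L[ℂ] H)
    (lam mu : Ω) : ‖⟪T (k lam), k mu⟫_ℂ‖ ≤ ‖T‖ :=
  calc ‖⟪T (k lam), k mu⟫_ℂ‖ ≤ ‖T (k lam)‖ * ‖k mu‖ := norm_inner_le_norm _ _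
    _ ≤ ‖T‖ * ‖k lam‖ * ‖k mu‖ := by gcongr; exact T.le_opNorm _
    _ = ‖T‖ := by rw [hk, hk, mul_one, mul_one]

omit [CompleteSpace H] [Nonempty Ω] in
theorem abs_re_inner_le_ber (hk : ∀ lam, ‖k lam‖ = 1) (T : H →L[ℂ] H) (lam : Ω) :
    |re ⟪T (k lam), k lam⟫_ℂ| ≤ ber k T :=
  (abs_re_le_norm _).trans <| le_ciSup (f := fun lam => ‖⟪T (k lam), k lam⟫_ℂ‖)
    ⟨‖T‖, by rintro _ ⟨mu, rfl⟩; exact norm_inner_le_opNorm_of_norm_eq_one hk T mu mu⟩ lam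

omit [CompleteSpace H] [Nonempty Ω] in
theorem abs_re_inner_le_bernorm (hk : ∀ lam, ‖k lam‖ = 1) (T : H →L[ℂ] H) (lam : Ω) :
    |re ⟪T (k lam), k lam⟫_ℂ| ≤ bernorm k T :=
  (abs_re_le_norm _).trans <| le_ciSup (f := fun p : Ω × Ω => ‖⟪T (k p.1), k p.2⟫_ℂ‖)
    ⟨‖T‖, by rintro _ ⟨p, rfl⟩; exact norm_inner_le_opNorm_of_norm_eq_one hk T p.1 p.2⟩ (lam, lam)

omit [CompleteSpace H] in
theorem eta_sq_le (T : H →L[ℂ] H) {r : ℝ}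
    (h : ∀ lam, ‖⟪T (k lam), k lam⟫_ℂ‖ ^ 2 + ‖T (k lam)‖ ^ 4 ≤ r) : eta k T ^ 2 ≤ r := by
  have hr : 0 ≤ r := (by positivity : (0 : ℝ) ≤ _).trans (h (Classical.arbitrary Ω))
  have heta : eta k T ≤ √r := Real.iSup_le (fun lam => Real.sqrt_le_sqrt (h lam)) (by positivity)
  calc eta k T ^ 2 ≤ √r ^ 2 := by gcongr; exact Real.iSup_nonneg fun _ => Real.sqrt_nonneg _
    _ = r := Real.sq_sqrt hr

end Berezin

theorem stmt7 (k : Ω → H) (hk : ∀ lam, ‖k lam‖ = 1) (A : H →L[ℂ] H) :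
    (eta k A) ^ 2 ≤
      (1 / 4) * (bernorm k (absop A + absop (adjoint A))) ^ 2 +
        (1 / 4) * ber k (2 • (absop A) ^ 2 + absop A - absop (adjoint A)) *
          ber k (2 • (absop A) ^ 2 - absop A + absop (adjoint A)) := by
  refine eta_sq_le A fun lam => (norm_inner_sq_add_norm_pow_four_le A (k lam)).trans ?_
  have hN := abs_re_inner_le_bernorm hk (absop A + absop (adjoint A)) lam
  have h₁ := abs_re_inner_le_ber hk (2 • absop A ^ 2 + absop A - absop (adjoint A)) lam
  have h₂ := abs_re_inner_le_ber hk (2 • absop A ^ 2 - absop A + absop (adjoint A)) lam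
  rw [mul_assoc (1 / 4 : ℝ)]
  refine add_le_add (mul_le_mul_of_nonneg_left ?_ (by norm_num))
    (mul_le_mul_of_nonneg_left ?_ (by norm_num))
  · exact sq_le_sq' (neg_le_of_abs_le hN) (le_of_abs_le hN)
  · calc _ ≤ |_| := le_abs_self _
      _ = _ := abs_mul _ _
      _ ≤ _ := mul_le_mul h₁ h₂ (abs_nonneg _) ((abs_nonneg _).trans h₁)
end

section
/- Let A be a bounded linear operator on H. Then for every α ∈ [0,1], η(A)² ≤ (α/2)·ber(A²) + ‖ (1 − 3α/4)|A|² + (α/4)|A*|² + |A|⁴ ‖_ber. -/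
open scoped InnerProductSpace
open ContinuousLinearMap

variable {H : Type*} [NormedAddCommGroup H] [InnerProductSpace ℂ H] [CompleteSpace H]
variable {Ω : Type*} [Nonempty Ω]

/-! For a unit vector `x`, Buzano's inequality gives
`|⟨Ax, x⟩|² ≤ (‖Ax‖ ‖A*x‖ + |⟨A²x, x⟩|) / 2` and Cauchy–Schwarz gives `|⟨Ax, x⟩|² ≤ ‖Ax‖²`.
Weighting these by `α` and `1 - α` and using `‖Ax‖ ‖A*x‖ ≤ (‖Ax‖² + ‖A*x‖²) / 2` bounds
`|⟨Ax, x⟩|²` by `(α/2) |⟨A²x, x⟩| + (1 - 3α/4) ‖Ax‖² + (α/4) ‖A*x‖²`, while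
`‖Ax‖⁴ = ⟨|A|²x, x⟩² ≤ ‖|A|²x‖² = ⟨|A|⁴x, x⟩`. The last three terms add up to the real number
`⟨Tx, x⟩` for the operator `T` on the right, which is at most `‖T‖_ber`. -/

/-- Buzano's inequality. The reflection `w = 2⟪e, u⟫ e - u` of `u` in the line through `e` has
`‖w‖ = ‖u‖` and `⟪w, v⟫ = 2 ⟪u, e⟫⟪e, v⟫ - ⟪u, v⟫`; apply Cauchy–Schwarz to `⟪w, v⟫`. -/
theorem norm_inner_mul_inner_le_of_norm_eq_one {𝕜 E : Type*} [RCLike 𝕜] [NormedAddCommGroup E]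
    [InnerProductSpace 𝕜 E] {e : E} (he : ‖e‖ = 1) (u v : E) :
    ‖⟪u, e⟫_𝕜 * ⟪e, v⟫_𝕜‖ ≤ (‖u‖ * ‖v‖ + ‖⟪u, v⟫_𝕜‖) / 2 := by
  set w : E := (2 * ⟪e, u⟫_𝕜) • e - u
  have hee : ⟪e, e⟫_𝕜 = 1 := by simp [he]
  have hw : ‖w‖ = ‖u‖ := by
    have : ⟪w, w⟫_𝕜 = ⟪u, u⟫_𝕜 := by
      simp only [w, inner_sub_sub_self, inner_smul_left, inner_smul_right, hee, map_mul,
        map_ofNat, inner_conj_symm, mul_one]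
      ring
    rw [norm_eq_sqrt_re_inner (𝕜 := 𝕜) w, norm_eq_sqrt_re_inner (𝕜 := 𝕜) u, this]
  have hwv : 2 * (⟪u, e⟫_𝕜 * ⟪e, v⟫_𝕜) = ⟪w, v⟫_𝕜 + ⟪u, v⟫_𝕜 := by
    simp only [w, inner_sub_left, inner_smul_left, map_mul, map_ofNat, inner_conj_symm]
    ring
  have hnorm := congrArg norm hwv
  rw [norm_mul, RCLike.norm_ofNat] at hnorm
  linarith [norm_add_le ⟪w, v⟫_𝕜 ⟪u, v⟫_𝕜, hw ▸ norm_inner_le_norm (𝕜 := 𝕜) w v]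

section Berezin

variable {E ι : Type*} [NormedAddCommGroup E] [InnerProductSpace ℂ E]
  {k : ι → E} (hk : ∀ i, ‖k i‖ = 1) (T : E →L[ℂ] E)
include hk

theorem norm_inner_apply_le_opNorm (i j : ι) : ‖⟪T (k i), k j⟫_ℂ‖ ≤ ‖T‖ :=
  calc ‖⟪T (k i), k j⟫_ℂ‖ ≤ ‖T (k i)‖ * ‖k j‖ := norm_inner_le_norm _ _
    _ ≤ ‖T‖ * ‖k i‖ * ‖k j‖ := by gcongr; exact T.le_opNorm _
    _ = ‖T‖ := by rw [hk, hk, mul_one, mul_one]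

theorem norm_inner_le_ber (i : ι) : ‖⟪T (k i), k i⟫_ℂ‖ ≤ ber k T :=
  le_ciSup ⟨‖T‖, Set.forall_mem_range.2 fun j => norm_inner_apply_le_opNorm hk T j j⟩ i

theorem norm_inner_le_bernorm (i j : ι) : ‖⟪T (k i), k j⟫_ℂ‖ ≤ bernorm k T :=
  le_ciSup (f := fun p : ι × ι => ‖⟪T (k p.1), k p.2⟫_ℂ‖)
    ⟨‖T‖, Set.forall_mem_range.2 fun p => norm_inner_apply_le_opNorm hk T p.1 p.2⟩ (i, j)

end Berezin

theorem sq_eta_le_of_forall {E ι : Type*} [NormedAddCommGroup E] [InnerProductSpace ℂ E]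
    [Nonempty ι] {k : ι → E} {T : E →L[ℂ] E} {S : ℝ}
    (hS : ∀ i, ‖⟪T (k i), k i⟫_ℂ‖ ^ 2 + ‖T (k i)‖ ^ 4 ≤ S) : eta k T ^ 2 ≤ S := by
  have hS0 : 0 ≤ S := (by positivity : (0 : ℝ) ≤ _).trans (hS (Classical.arbitrary ι))
  calc eta k T ^ 2 ≤ √S ^ 2 := by
        gcongr
        · exact Real.iSup_nonneg fun _ => Real.sqrt_nonneg _
        · exact ciSup_le fun i => Real.sqrt_le_sqrt (hS i)
    _ = S := Real.sq_sqrt hS0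

theorem inner_adjoint_mul_self_apply_self (B : H →L[ℂ] H) (x : H) :
    ⟪(adjoint B * B) x, x⟫_ℂ = ((‖B x‖ ^ 2 : ℝ) : ℂ) := by
  rw [mul_apply_eq_comp, adjoint_inner_left, inner_self_eq_norm_sq_to_K]
  push_cast; rfl

theorem absop_pow_four (A : H →L[ℂ] H) :
    absop A ^ 4 = adjoint (adjoint A * A) * (adjoint A * A) := by
  have hsa : IsSelfAdjoint (adjoint A * A) := by
    simpa only [star_eq_adjoint] using IsSelfAdjoint.star_mul_self A
  rw [hsa.adjoint_eq, show absop A ^ 4 = (absop A ^ 2) ^ 2 by rw [← pow_mul], absop_sq, sq]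

theorem inner_absop_combination_apply_self (A : H →L[ℂ] H) (c d : ℝ) (x : H) :
    ⟪((c : ℂ) • absop A ^ 2 + (d : ℂ) • absop (adjoint A) ^ 2 + absop A ^ 4) x, x⟫_ℂ =
      ((c * ‖A x‖ ^ 2 + d * ‖adjoint A x‖ ^ 2 + ‖(adjoint A * A) x‖ ^ 2 : ℝ) : ℂ) := by
  simp only [add_apply, smul_apply, inner_add_left, inner_smul_left, Complex.conj_ofReal,
    absop_sq, absop_pow_four, inner_adjoint_mul_self_apply_self]
  push_cast
  ring

section UnitVector

variable {x : H} (hx : ‖x‖ = 1) (A : H →L[ℂ] H)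
include hx

theorem sq_norm_inner_apply_self_le :
    ‖⟪A x, x⟫_ℂ‖ ^ 2 ≤ (‖A x‖ * ‖adjoint A x‖ + ‖⟪(A ^ 2) x, x⟫_ℂ‖) / 2 := by
  have h := norm_inner_mul_inner_le_of_norm_eq_one (𝕜 := ℂ) hx (A x) (adjoint A x)
  rwa [adjoint_inner_right, adjoint_inner_right, ← mul_apply_eq_comp, ← sq, norm_pow, ← sq] at h

theorem sq_norm_inner_apply_self_le_of_mem_Icc {α : ℝ} (hα : α ∈ Set.Icc (0 : ℝ) 1) :
    ‖⟪A x, x⟫_ℂ‖ ^ 2 ≤ α / 2 * ‖⟪(A ^ 2) x, x⟫_ℂ‖ + (1 - 3 * α / 4) * ‖A x‖ ^ 2 +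
      α / 4 * ‖adjoint A x‖ ^ 2 := by
  obtain ⟨hα0, hα1⟩ := hα
  have hbuzano := sq_norm_inner_apply_self_le hx A
  have hcs : ‖⟪A x, x⟫_ℂ‖ ≤ ‖A x‖ := by simpa [hx] using norm_inner_le_norm (𝕜 := ℂ) (A x) x
  -- split `‖⟪A x, x⟫‖²` with weights `α` and `1 - α`, then use AM-GM on `‖A x‖ ‖A† x‖`
  nlinarith [mul_le_mul_of_nonneg_left hbuzano hα0,
    mul_le_mul_of_nonneg_left (pow_le_pow_left₀ (norm_nonneg _) hcs 2) (sub_nonneg.2 hα1),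
    mul_nonneg hα0 (sq_nonneg (‖A x‖ - ‖adjoint A x‖))]

theorem norm_apply_pow_four_le : ‖A x‖ ^ 4 ≤ ‖(adjoint A * A) x‖ ^ 2 := by
  have h : ‖A x‖ ^ 2 ≤ ‖(adjoint A * A) x‖ := by
    have hcs := norm_inner_le_norm (𝕜 := ℂ) ((adjoint A * A) x) x
    rwa [inner_adjoint_mul_self_apply_self, Complex.norm_real, Real.norm_of_nonneg (by positivity),
      hx, mul_one] at hcs
  calc ‖A x‖ ^ 4 = (‖A x‖ ^ 2) ^ 2 := by ring
    _ ≤ ‖(adjoint A * A) x‖ ^ 2 := by gcongr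

end UnitVector

theorem stmt15 (k : Ω → H) (hk : ∀ lam, ‖k lam‖ = 1) (A : H →L[ℂ] H)
    (α : ℝ) (hα : α ∈ Set.Icc (0 : ℝ) 1) :
    (eta k A) ^ 2 ≤
      (α / 2) * ber k (A ^ 2) +
        bernorm k (((1 - 3 * α / 4 : ℝ) : ℂ) • (absop A) ^ 2 +
          ((α / 4 : ℝ) : ℂ) • (absop (adjoint A)) ^ 2 + (absop A) ^ 4) := by
  refine sq_eta_le_of_forall fun lam => ?_
  set x := k lam
  set T : H →L[ℂ] H := ((1 - 3 * α / 4 : ℝ) : ℂ) • absop A ^ 2 +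
    ((α / 4 : ℝ) : ℂ) • absop (adjoint A) ^ 2 + absop A ^ 4
  have hT : (1 - 3 * α / 4) * ‖A x‖ ^ 2 + α / 4 * ‖adjoint A x‖ ^ 2 +
      ‖(adjoint A * A) x‖ ^ 2 ≤ bernorm k T := by
    refine le_trans ?_ (norm_inner_le_bernorm hk T lam lam)
    rw [inner_absop_combination_apply_self, Complex.norm_real]
    exact Real.le_norm_self _
  calc ‖⟪A x, x⟫_ℂ‖ ^ 2 + ‖A x‖ ^ 4
      ≤ α / 2 * ‖⟪(A ^ 2) x, x⟫_ℂ‖ + (1 - 3 * α / 4) * ‖A x‖ ^ 2 + α / 4 * ‖adjoint A x‖ ^ 2 +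
          ‖(adjoint A * A) x‖ ^ 2 :=
        add_le_add (sq_norm_inner_apply_self_le_of_mem_Icc (hk lam) A hα)
          (norm_apply_pow_four_le (hk lam) A)
    _ ≤ α / 2 * ber k (A ^ 2) + bernorm k T := by
        linarith [mul_le_mul_of_nonneg_left (norm_inner_le_ber hk (A ^ 2) lam)
          (div_nonneg hα.1 zero_le_two)]
end
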